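/- Let s be a word and p = (p(1), ..., p(k)) a word, and consider the expansion s^⌢(p(1))^⌢s^⌢⋯^⌢(p(k))^⌢s. If t = s^⌢(u(1))^⌢s^⌢⋯^⌢(u(m))^⌢s occurs in s^⌢(p(1))^⌢s^⌢⋯^⌢(p(k))^⌢s with every copy of s in t aligned with a copy of s in the ambient word, then u = (u(1), ..., u(m)) is a subword of p. -/

import Mathlib

/-- The expansion `s ⌢ (p 1) ⌢ s ⌢ ⋯ ⌢ (p m) ⌢ s`. -/
def expand (s p : List ℕ) : List ℕ :=
  p.foldl (fun acc a => acc ++ [a] ++ s) s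

/-- `t` occurs in `w` at position `j`. -/
def occursAt (t w : List ℕ) (j : ℕ) : Prop :=
  j + t.length ≤ w.length ∧ t = (w.drop j).take t.length

private lemma expand_foldl_aux (s : List ℕ) : ∀ (p acc : List ℕ),
    p.foldl (fun acc a => acc ++ [a] ++ s) acc = acc ++ p.flatMap (fun a => [a] ++ s)
  | [], acc => by simp
  | a :: p, acc => by
    rw [List.foldl_cons, expand_foldl_aux s p]
    simp [List.append_assoc]

lemma expand_eq (s p : List ℕ) :
    expand s p = p.flatMap (fun a => s ++ [a]) ++ s := by
  rw [expand, expand_foldl_aux]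
  induction p with
  | nil => simp
  | cons a p ih =>
    rw [List.flatMap_cons, List.flatMap_cons, List.append_assoc, List.append_assoc,
      ← ih]
    simp [List.append_assoc]

lemma expand_cons (s : List ℕ) (a : ℕ) (p : List ℕ) :
    expand s (a :: p) = (s ++ [a]) ++ expand s p := by
  rw [expand_eq, expand_eq, List.flatMap_cons]
  simp [List.append_assoc]

lemma expand_length (s p : List ℕ) :
    (expand s p).length = p.length * (s.length + 1) + s.length := by
  induction p with
  | nil => simp [expand]
  | cons a p ih =>
    rw [expand_cons]
    simp only [List.length_append, ih, List.length_cons]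
    simp
    ring

lemma drop_expand (s : List ℕ) : ∀ (q : ℕ) (p : List ℕ), q ≤ p.length →
    (expand s p).drop (q * (s.length + 1)) = expand s (p.drop q)
  | 0, p, _ => by simp
  | q + 1, [], h => by simp at h
  | q + 1, b :: p, h => by
    rw [expand_cons]
    have hL : (q + 1) * (s.length + 1) = (s ++ [b]).length + q * (s.length + 1) := by
      simp; ring
    rw [hL, List.drop_length_add_append, drop_expand s q p (by simpa using h)]
    simp

lemma take_expand (s : List ℕ) : ∀ (u v : List ℕ), u.length ≤ v.length →
    expand s u = (expand s v).take (expand s u).length → u <+: v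
  | [], _, _, _ => List.nil_prefix
  | a :: u, [], h, _ => by simp at h
  | a :: u, b :: v, h, heq => by
    rw [expand_cons, expand_cons, List.length_append] at heq
    have hlen : (s ++ [a]).length = (s ++ [b]).length := by simp
    rw [hlen, List.take_length_add_append] at heq
    obtain ⟨h1, h2⟩ := List.append_inj heq hlen
    have hab : a = b := by
      have := congrArg (fun l => l.getLast?) h1
      simpa using this
    subst hab
    exact List.cons_prefix_cons.mpr ⟨rfl, take_expand s u v (by simpa using h) h2⟩

/-- If the expansion of `s` by `u` occurs in the expansion of `s` by `p` at a position `j`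
that is aligned (each copy of `s` begins where a demonstrated copy of `s` begins, i.e.
`s.length + 1` divides `j`), then `u` is a subword of `p`. -/
theorem aligned_occurrence_subword (s u p : List ℕ) (j : ℕ)
    (hocc : occursAt (expand s u) (expand s p) j)
    (haligned : (s.length + 1) ∣ j) :
    u <:+: p := by
  obtain ⟨q, rfl⟩ := haligned
  obtain ⟨hle, heq⟩ := hocc
  rw [expand_length, expand_length] at hle
  have hq : q + u.length ≤ p.length := by
    have h1 : (q + u.length) * (s.length + 1) ≤ p.length * (s.length + 1) := by nlinarith
    exact Nat.le_of_mul_le_mul_right h1 (Nat.succ_pos _)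
  rw [Nat.mul_comm, drop_expand s q p (by omega)] at heq
  have hpre : u <+: p.drop q := take_expand s u (p.drop q) (by simp; omega) heq
  exact hpre.isInfix.trans (p.drop_suffix q).isInfix
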